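/- Let u, v : {0,...,N} → ℝ with u_i = v_i for i ∈ {0, N}, and let f : ℝ → ℝ be nondecreasing. Suppose (L_h u)_i ≤ f(u_i) and (L_h v)_i ≥ f(v_i) for all interior i (u is a discrete supersolution, v a discrete subsolution). Then v_i ≤ u_i for all i. -/

import Mathlib

/-!
Set `w = v - u`. Wherever `w > 0`, monotonicity of `f` gives
`L_h u ≤ f u ≤ f v ≤ L_h v`, so `L_h w ≥ 0` there. At the leftmost maximum of `w` on
`{0, …, N}` the left neighbour is strictly smaller and the right one is not larger, so
`L_h w < 0`. So a positive maximum can sit neither in the interior nor on the boundary,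
where `w = 0`.
-/

theorem exists_leftmost_max {α : Type*} [LinearOrder α] (w : ℕ → α) (N : ℕ) :
    ∃ k ≤ N, (∀ j ≤ N, w j ≤ w k) ∧ ∀ j < k, w j < w k := by
  obtain ⟨m, hm, hmax⟩ := (Finset.range (N + 1)).exists_max_image w ⟨0, by simp⟩
  have hex : ∃ k, k ≤ N ∧ w k = w m := ⟨m, Finset.mem_range_succ_iff.mp hm, rfl⟩
  obtain ⟨hkN, hkm⟩ := Nat.find_spec hex
  have hle : ∀ j ≤ N, w j ≤ w m := fun j hj => hmax j (Finset.mem_range_succ_iff.mpr hj)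
  refine ⟨Nat.find hex, hkN, fun j hj => hkm.symm ▸ hle j hj, fun j hj => ?_⟩
  have hjN : j ≤ N := hj.le.trans hkN
  exact hkm.symm ▸ (hle j hjN).lt_of_ne fun hjm => Nat.find_min hex hj ⟨hjN, hjm⟩

variable {K : Type*} [Field K] [LinearOrder K] [IsStrictOrderedRing K]

def discreteLaplacian (h : K) (w : ℕ → K) (i : ℕ) : K :=
  (w (i - 1) - 2 * w i + w (i + 1)) / h ^ 2

theorem discreteLaplacian_sub (h : K) (v u : ℕ → K) (i : ℕ) :
    discreteLaplacian h (v - u) i = discreteLaplacian h v i - discreteLaplacian h u i := by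
  simp only [discreteLaplacian, Pi.sub_apply]
  ring

theorem discreteLaplacian_neg_of_left_lt_of_right_le {h : K} (hh : h ≠ 0) {w : ℕ → K} {k : ℕ}
    (hleft : w (k - 1) < w k) (hright : w (k + 1) ≤ w k) :
    discreteLaplacian h w k < 0 :=
  div_neg_of_neg_of_pos (by linarith) (sq_pos_of_ne_zero hh)

theorem nonpos_of_discreteLaplacian_nonneg {h : K} (hh : h ≠ 0) {w : ℕ → K} {N : ℕ}
    (h0 : w 0 ≤ 0) (hN : w N ≤ 0)
    (hsub : ∀ i, 1 ≤ i → i < N → 0 < w i → 0 ≤ discreteLaplacian h w i) :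
    ∀ i ≤ N, w i ≤ 0 := by
  obtain ⟨k, hkN, hmax, hleft⟩ := exists_leftmost_max w N
  suffices hk : w k ≤ 0 from fun i hi => (hmax i hi).trans hk
  by_contra! hpos
  have hk0 : k ≠ 0 := by rintro rfl; exact hpos.not_ge h0
  have hkN' : k ≠ N := by rintro rfl; exact hpos.not_ge hN
  have hlap := discreteLaplacian_neg_of_left_lt_of_right_le hh (hleft (k - 1) (by omega))
    (hmax (k + 1) (by omega))
  exact hlap.not_ge (hsub k (by omega) (by omega) hpos)

theorem stmt_4_general (N : ℕ) (h : ℝ) (hh : 0 < h)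
    (f : ℝ → ℝ) (hf : Monotone f) (u v : ℕ → ℝ)
    (hb0 : u 0 = v 0) (hbN : u N = v N)
    (hu : ∀ i, 1 ≤ i → i < N → (u (i - 1) - 2 * u i + u (i + 1)) / h ^ 2 ≤ f (u i))
    (hv : ∀ i, 1 ≤ i → i < N → f (v i) ≤ (v (i - 1) - 2 * v i + v (i + 1)) / h ^ 2) :
    ∀ i ≤ N, v i ≤ u i := by
  have hw : ∀ i ≤ N, (v - u) i ≤ 0 := by
    refine nonpos_of_discreteLaplacian_nonneg hh.ne' (by simp [hb0]) (by simp [hbN]) ?_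
    intro i hi hiN hpos
    have huv : u i ≤ v i := by simpa using hpos.le
    rw [discreteLaplacian_sub, sub_nonneg]
    exact (hu i hi hiN).trans ((hf huv).trans (hv i hi hiN))
  exact fun i hi => sub_nonpos.mp (hw i hi)

theorem stmt_4 (N : ℕ) (hN : 2 ≤ N) (h : ℝ) (hh : 0 < h)
    (f : ℝ → ℝ) (hf : Monotone f) (u v : ℕ → ℝ)
    (hb0 : u 0 = v 0) (hbN : u N = v N)
    (hu : ∀ i, 1 ≤ i → i < N → (u (i - 1) - 2 * u i + u (i + 1)) / h ^ 2 ≤ f (u i))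
    (hv : ∀ i, 1 ≤ i → i < N → f (v i) ≤ (v (i - 1) - 2 * v i + v (i + 1)) / h ^ 2) :
    ∀ i ≤ N, v i ≤ u i :=
  stmt_4_general N h hh f hf u v hb0 hbN hu hv
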